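/- Let $f : \mathbb{R}_{\ge 0}^n \to \mathbb{R}_{\ge 0}$ be monotonically increasing in every coordinate, and suppose there exist positive reals $(\alpha_i)_{i \in [n]}$ and $(t_i)_{i \in [n]}$ such that for all $\lambda \ge 0$: $f(\lambda^{\alpha_0} t_0, \ldots, \lambda^{\alpha_{n-1}} t_{n-1}) \le \lambda f(t_0, \ldots, t_{n-1})$. Let $(X_i)_{i \in [n]}$ be nonnegative random variables with finite relevant moments. Then for every $p \ge 1$: $\|f(X_0, \ldots, X_{n-1})\|_p \le n^{1/p} \max_{i \in [n]} (\|X_i\|_{p/\alpha_i} / t_i)^{1/\alpha_i} \cdot f(t_0, \ldots, t_{n-1})$. -/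

import Mathlib

/-! Put `s = ∑ i (X i / t i) ^ (p / α i)` and `λ = s ^ (1 / p)`. Then `X i ≤ λ ^ α i * t i` for
every `i`, so monotonicity and the scaling hypothesis give `f X ≤ λ f t`, i.e.
`f X ^ p ≤ f t ^ p * s` pointwise. Taking expectations, each summand contributes the `p`-th power
of the `i`-th term of the maximum, and there are `n` of them. -/

open MeasureTheory Real Finset

theorem le_rpow_inv_rpow_mul_of_div_rpow_le {x t a s p : ℝ} (hx : 0 ≤ x) (ht : 0 < t)
    (ha : 0 < a) (hp : 0 < p) (h : (x / t) ^ (p / a) ≤ s) : x ≤ (s ^ p⁻¹) ^ a * t := by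
  have hxt : 0 ≤ x / t := div_nonneg hx ht.le
  have hdiv : x / t ≤ (s ^ p⁻¹) ^ a :=
    calc x / t = ((x / t) ^ (p / a)) ^ (p / a)⁻¹ := (rpow_rpow_inv hxt (by positivity)).symm
      _ ≤ s ^ (p / a)⁻¹ := rpow_le_rpow (rpow_nonneg hxt _) h (by positivity)
      _ = (s ^ p⁻¹) ^ a := by
        rw [← rpow_mul ((rpow_nonneg hxt _).trans h), inv_div, div_eq_inv_mul]
  exact (div_le_iff₀ ht).mp hdiv

theorem rpow_div_rpow_one_div_rpow {a t α p : ℝ} (ha : 0 ≤ a) (ht : 0 ≤ t) (hα : α ≠ 0)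
    (hp : p ≠ 0) : ((a ^ (α / p) / t) ^ (1 / α)) ^ p = a / t ^ (p / α) := by
  rw [← rpow_mul (div_nonneg (rpow_nonneg ha _) ht), div_rpow (rpow_nonneg ha _) ht,
    ← rpow_mul ha, one_div_mul_eq_div, show α / p * (p / α) = 1 by field_simp, rpow_one]

section ScalingBound

variable {ι : Type*} [Fintype ι] {f : (ι → ℝ) → ℝ} {α t : ι → ℝ} {p : ℝ}

theorem apply_rpow_le_mul_sum_div_rpow (hf0 : ∀ x : ι → ℝ, (∀ i, 0 ≤ x i) → 0 ≤ f x)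
    (hmono : ∀ x y : ι → ℝ, (∀ i, 0 ≤ x i) → (∀ i, x i ≤ y i) → f x ≤ f y)
    (hα : ∀ i, 0 < α i) (ht : ∀ i, 0 < t i)
    (hhom : ∀ lam : ℝ, 0 ≤ lam → f (fun i => lam ^ (α i) * t i) ≤ lam * f t)
    (hp : 0 < p) {x : ι → ℝ} (hx : ∀ i, 0 ≤ x i) :
    f x ^ p ≤ f t ^ p * ∑ i, (x i / t i) ^ (p / α i) := by
  set s := ∑ i, (x i / t i) ^ (p / α i)
  have hs : 0 ≤ s := sum_nonneg fun i _ => rpow_nonneg (div_nonneg (hx i) (ht i).le) _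
  have hx_le : ∀ i, x i ≤ (s ^ p⁻¹) ^ α i * t i := fun i =>
    le_rpow_inv_rpow_mul_of_div_rpow_le (hx i) (ht i) (hα i) hp <|
      single_le_sum (f := fun j => (x j / t j) ^ (p / α j))
        (fun j _ => rpow_nonneg (div_nonneg (hx j) (ht j).le) _) (mem_univ i)
  have hfx : f x ≤ s ^ p⁻¹ * f t := (hmono x _ hx hx_le).trans (hhom _ (rpow_nonneg hs _))
  calc f x ^ p ≤ (s ^ p⁻¹ * f t) ^ p := rpow_le_rpow (hf0 x hx) hfx hp.le
    _ = f t ^ p * s := by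
      rw [mul_rpow (rpow_nonneg hs _) (hf0 t fun i => (ht i).le), rpow_inv_rpow hs hp.ne',
        mul_comm]

theorem integral_apply_rpow_le {Ω : Type*} [MeasurableSpace Ω] {μ : Measure Ω}
    (hf0 : ∀ x : ι → ℝ, (∀ i, 0 ≤ x i) → 0 ≤ f x)
    (hmono : ∀ x y : ι → ℝ, (∀ i, 0 ≤ x i) → (∀ i, x i ≤ y i) → f x ≤ f y)
    (hα : ∀ i, 0 < α i) (ht : ∀ i, 0 < t i)
    (hhom : ∀ lam : ℝ, 0 ≤ lam → f (fun i => lam ^ (α i) * t i) ≤ lam * f t)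
    (hp : 0 < p) {X : ι → Ω → ℝ} (hX : ∀ i ω, 0 ≤ X i ω)
    (hint : ∀ i, Integrable (fun ω => X i ω ^ (p / α i)) μ) :
    ∫ ω, f (fun i => X i ω) ^ p ∂μ ≤
      f t ^ p * ∑ i, (∫ ω, X i ω ^ (p / α i) ∂μ) / t i ^ (p / α i) := by
  have hdiv : ∀ i ω, (X i ω / t i) ^ (p / α i) = X i ω ^ (p / α i) / t i ^ (p / α i) :=
    fun i ω => div_rpow (hX i ω) (ht i).le _
  have hint_sum : ∀ i ∈ univ, Integrable (fun ω => X i ω ^ (p / α i) / t i ^ (p / α i)) μ :=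
    fun i _ => (hint i).div_const _
  calc ∫ ω, f (fun i => X i ω) ^ p ∂μ
      ≤ ∫ ω, f t ^ p * ∑ i, (X i ω / t i) ^ (p / α i) ∂μ := by
        refine integral_mono_of_nonneg
          (ae_of_all _ fun ω => rpow_nonneg (hf0 _ (hX · ω)) _) ?_
          (ae_of_all _ fun ω => apply_rpow_le_mul_sum_div_rpow hf0 hmono hα ht hhom hp (hX · ω))
        simpa only [hdiv] using (integrable_finsetSum _ hint_sum).const_mul _
    _ = f t ^ p * ∑ i, (∫ ω, X i ω ^ (p / α i) ∂μ) / t i ^ (p / α i) := by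
        simp only [hdiv, integral_const_mul, integral_finsetSum _ hint_sum, integral_div]

end ScalingBound

theorem fn_moment {Ω : Type*} [MeasurableSpace Ω]
    (μ : Measure Ω)
    (n : ℕ) (hn : 0 < n)
    (f : (Fin n → ℝ) → ℝ)
    (hf0 : ∀ x : Fin n → ℝ, (∀ i, 0 ≤ x i) → 0 ≤ f x)
    (hmono : ∀ x y : Fin n → ℝ, (∀ i, 0 ≤ x i) → (∀ i, x i ≤ y i) → f x ≤ f y)
    (α t : Fin n → ℝ) (hα : ∀ i, 0 < α i) (ht : ∀ i, 0 < t i)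
    (hhom : ∀ lam : ℝ, 0 ≤ lam → f (fun i => lam ^ (α i) * t i) ≤ lam * f t)
    (X : Fin n → Ω → ℝ) (hX : ∀ i ω, 0 ≤ X i ω)
    (p : ℝ) (hp : 1 ≤ p)
    (hint : ∀ i, Integrable (fun ω => X i ω ^ (p / α i)) μ) :
    (∫ ω, f (fun i => X i ω) ^ p ∂μ) ^ (1 / p) ≤
      (n : ℝ) ^ (1 / p) *
        (Finset.univ.sup' ⟨⟨0, hn⟩, Finset.mem_univ _⟩ fun i =>
          ((∫ ω, |X i ω| ^ (p / α i) ∂μ) ^ (α i / p) / t i) ^ (1 / α i)) *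
        f t := by
  have hp0 : 0 < p := one_pos.trans_le hp
  have hft : 0 ≤ f t := hf0 t fun i => (ht i).le
  simp only [abs_of_nonneg (hX _ _)]
  set g : Fin n → ℝ := fun i => ((∫ ω, X i ω ^ (p / α i) ∂μ) ^ (α i / p) / t i) ^ (1 / α i)
  set M := univ.sup' ⟨⟨0, hn⟩, mem_univ _⟩ g
  have hmoment : ∀ i, 0 ≤ ∫ ω, X i ω ^ (p / α i) ∂μ := fun i =>
    integral_nonneg fun ω => rpow_nonneg (hX i ω) _
  have hg0 : ∀ i, 0 ≤ g i := fun i =>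
    rpow_nonneg (div_nonneg (rpow_nonneg (hmoment i) _) (ht i).le) _
  have hgp : ∀ i, g i ^ p = (∫ ω, X i ω ^ (p / α i) ∂μ) / t i ^ (p / α i) := fun i =>
    rpow_div_rpow_one_div_rpow (hmoment i) (ht i).le (hα i).ne' hp0.ne'
  have hsum : ∑ i, g i ^ p ≤ n * M ^ p := by
    simpa using sum_le_card_nsmul univ _ _ fun i _ =>
      rpow_le_rpow (hg0 i) (le_sup' g (mem_univ i)) hp0.le
  calc (∫ ω, f (fun i => X i ω) ^ p ∂μ) ^ (1 / p)
      ≤ (f t ^ p * ∑ i, g i ^ p) ^ (1 / p) := by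
        refine rpow_le_rpow (integral_nonneg fun ω => rpow_nonneg (hf0 _ (hX · ω)) _) ?_
          (by positivity)
        simpa only [hgp] using integral_apply_rpow_le hf0 hmono hα ht hhom hp0 hX hint
    _ ≤ (f t ^ p * (n * M ^ p)) ^ (1 / p) := by
        gcongr
        exact mul_nonneg (rpow_nonneg hft _) (sum_nonneg fun i _ => rpow_nonneg (hg0 i) _)
    _ = (n : ℝ) ^ (1 / p) * M * f t := by
        have hM : 0 ≤ M := (hg0 _).trans (le_sup' g (mem_univ ⟨0, hn⟩))
        rw [mul_rpow (by positivity) (by positivity), mul_rpow (by positivity) (by positivity),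
          one_div, rpow_rpow_inv hft hp0.ne', rpow_rpow_inv hM hp0.ne']
        ring
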